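/- arXiv:1905.12797 — 4 statements merged into one kernel-verified Lean document; each statement's English description precedes it below -/
import Mathlib

section
/- Let f : ℝ^n → ℝ be a piecewise linear function. Then there exist finitely many infinite simplices ℜ^+_{V_1}, …, ℜ^+_{V_L} (each V_l a set of n linearly independent vectors in ℝ^n), pairwise disjoint, whose union has Lebesgue-null complement in ℝ^n, and weight vectors w_1, …, w_L ∈ ℝ^n, such that f(x) = w_l ⋅ x for every x ∈ ℜ^+_{V_l}. Consequently, defining f_l(x) = w_l ⋅ x for x ∈ ℜ^+_{V_l} and f_l(x) = 0 otherwise, one has f(x) = Σ_{l=1}^L f_l(x) for every x in the union of the simplices, hence Lebesgue-almost everywhere. -/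
/-!
Cutting `ℝⁿ` by the coordinate hyperplanes leaves the open orthants, which are infinite simplices.
Intersecting an infinite simplex with an open half-space `{g > 0}` gives, up to a null set, a finite
disjoint union of infinite simplices. In coordinates adapted to the simplex it is the positive
orthant: if the coefficients `g(e_p) > 0 > g(e_q)` have opposite signs, the hyperplane
`x_p = t x_q` (with `t = -g(e_q) / g(e_p)`) cuts the orthant into its images under the transvections
`e_q ↦ e_q + t e_p` and `e_p ↦ e_p + t⁻¹ e_q`, and in the new coordinates `g` has one nonzero
coefficient fewer; otherwise `{g > 0}` contains the whole orthant or misses it. Cutting in turn by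
all the hyperplanes `ker φᵢ` yields finitely many disjoint simplices covering `ℝⁿ` up to a null set
and avoiding every `ker φᵢ`. Each is convex, so it lies in one connected component of the
complement of the hyperplanes, where `f` is linear.
-/

open MeasureTheory

def IsPiecewiseLinear {n : ℕ} (f : (Fin n → ℝ) → ℝ) : Prop :=
  Continuous f ∧
    ∃ (k : ℕ) (φ : Fin k → ((Fin n → ℝ) →ₗ[ℝ] ℝ)),
      (∀ i, φ i ≠ 0) ∧
        ∀ x ∈ {y : Fin n → ℝ | ∀ i, φ i y ≠ 0},
          ∃ w : Fin n → ℝ,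
            ∀ y ∈ connectedComponentIn {y : Fin n → ℝ | ∀ i, φ i y ≠ 0} x,
              f y = ∑ j, w j * y j

def InfiniteSimplex {n : ℕ} (V : Fin n → (Fin n → ℝ)) : Set (Fin n → ℝ) :=
  {x | ∃ α : Fin n → ℝ, (∀ k, 0 < α k) ∧ x = ∑ k, α k • V k}

open Finset Module Function

theorem addHaar_setOf_apply_eq_zero {E : Type*} [NormedAddCommGroup E] [NormedSpace ℝ E]
    [MeasurableSpace E] [BorelSpace E] [FiniteDimensional ℝ E] (μ : Measure E)
    [μ.IsAddHaarMeasure] {g : Dual ℝ E} (hg : g ≠ 0) : μ {x | g x = 0} = 0 :=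
  Measure.addHaar_submodule μ (LinearMap.ker g) (by rwa [Ne, LinearMap.ker_eq_top])

theorem sum_indicator_of_pairwise_disjoint {ι α M : Type*} [Fintype ι] [AddCommMonoid M]
    {s : ι → Set α} (hs : Pairwise (Disjoint on s)) (g : ι → α → M) {l : ι} {x : α}
    (hx : x ∈ s l) : ∑ l', (s l').indicator (g l') x = g l x := by
  rw [sum_eq_single l (fun l' _ hl' => Set.indicator_of_notMem
    (fun hx' => Set.disjoint_left.1 (hs hl') hx' hx) _) (by simp), Set.indicator_of_mem hx]

section

variable {n : ℕ}

theorem Module.Dual.apply_eq_sum_mul (g : Dual ℝ (Fin n → ℝ)) (x : Fin n → ℝ) :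
    g x = ∑ k, x k * g (Pi.single k 1) := by
  conv_lhs => rw [pi_eq_sum_univ' x]
  simp [map_sum]

theorem infiniteSimplex_eq_image (V : Fin n → Fin n → ℝ) :
    InfiniteSimplex V = Fintype.linearCombination ℝ V '' {α | ∀ k, 0 < α k} := by
  ext x
  simp [InfiniteSimplex, Fintype.linearCombination_apply, eq_comm]

theorem convex_infiniteSimplex (V : Fin n → Fin n → ℝ) : Convex ℝ (InfiniteSimplex V) := by
  rw [infiniteSimplex_eq_image]
  have : Convex ℝ {α : Fin n → ℝ | ∀ k, 0 < α k} := fun x hx y hy a b ha hb hab k =>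
    convex_Ioi (0 : ℝ) (hx k) (hy k) ha hb hab
  exact this.linear_image _

theorem sum_mem_infiniteSimplex (V : Fin n → Fin n → ℝ) : ∑ k, V k ∈ InfiniteSimplex V :=
  ⟨fun _ => 1, fun _ => one_pos, by simp⟩

theorem infiniteSimplex_comp (T : (Fin n → ℝ) →ₗ[ℝ] Fin n → ℝ) (V : Fin n → Fin n → ℝ) :
    InfiniteSimplex (T ∘ V) = T '' InfiniteSimplex V := by
  simp only [infiniteSimplex_eq_image, Set.image_image]
  congr! 1 with α
  simp [Fintype.linearCombination_apply, map_sum]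

theorem infiniteSimplex_basisFun :
    InfiniteSimplex (Pi.basisFun ℝ (Fin n)) = {α | ∀ k, 0 < α k} := by
  ext x
  simp [InfiniteSimplex, ← pi_eq_sum_univ']

theorem infiniteSimplex_single_sign {σ : Fin n → SignType} (hσ : ∀ j, σ j ≠ 0) :
    InfiniteSimplex (fun j => Pi.single j (σ j : ℝ)) = {x | ∀ j, SignType.sign (x j) = σ j} := by
  have hx (x α : Fin n → ℝ) :
      x = ∑ k, α k • Pi.single k (σ k : ℝ) ↔ ∀ j, x j = α j * σ j := by
    simp [funext_iff, Pi.single_apply]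
  ext x
  constructor
  · rintro ⟨α, hα, hxα⟩ j
    rw [(hx x α).1 hxα j, sign_mul, sign_pos (hα j), one_mul]
    generalize σ j = s
    cases s <;> simp
  · intro hxσ
    refine ⟨fun j => |x j|, fun j => abs_pos.2 (sign_ne_zero.1 ((hxσ j).trans_ne (hσ j))), ?_⟩
    exact (hx x _).2 fun j => by rw [← hxσ j, abs_mul_sign]

structure IsSimplicialFan (S : Set (Fin n → ℝ)) {ι : Type} (V : ι → Fin n → Fin n → ℝ) :
    Prop where
  linearIndependent : ∀ l, LinearIndependent ℝ (V l)
  pairwise_disjoint :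
    Pairwise fun l l' => Disjoint (InfiniteSimplex (V l)) (InfiniteSimplex (V l'))
  subset : ∀ l, InfiniteSimplex (V l) ⊆ S
  measure_diff_iUnion : volume (S \ ⋃ l, InfiniteSimplex (V l)) = 0

def HasSimplicialFan (S : Set (Fin n → ℝ)) : Prop :=
  ∃ (ι : Type) (_ : Finite ι) (V : ι → Fin n → Fin n → ℝ), IsSimplicialFan S V

namespace IsSimplicialFan

variable {S : Set (Fin n → ℝ)} {ι : Type} {V : ι → Fin n → Fin n → ℝ}

theorem comp_equiv (h : IsSimplicialFan S V) {κ : Type} (e : κ ≃ ι) :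
    IsSimplicialFan S (V ∘ e) where
  linearIndependent l := h.linearIndependent (e l)
  pairwise_disjoint := h.pairwise_disjoint.comp_of_injective e.injective
  subset l := h.subset (e l)
  measure_diff_iUnion := by
    show volume (S \ ⋃ l, InfiniteSimplex (V (e l))) = 0
    rw [e.surjective.iUnion_comp fun l => InfiniteSimplex (V l)]
    exact h.measure_diff_iUnion

theorem measure_compl_iUnion (h : IsSimplicialFan S V) (hS : volume Sᶜ = 0) :
    volume (⋃ l, InfiniteSimplex (V l))ᶜ = 0 := by
  refine measure_mono_null (fun x hx => ?_) (measure_union_null h.measure_diff_iUnion hS)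
  by_cases hxS : x ∈ S
  exacts [Or.inl ⟨hxS, hx⟩, Or.inr hxS]

end IsSimplicialFan

namespace HasSimplicialFan

variable {S : Set (Fin n → ℝ)}

theorem exists_fin (h : HasSimplicialFan S) :
    ∃ (L : ℕ) (V : Fin L → Fin n → Fin n → ℝ), IsSimplicialFan S V := by
  obtain ⟨ι, _, V, hV⟩ := h
  obtain ⟨L, ⟨e⟩⟩ := Finite.exists_equiv_fin ι
  exact ⟨L, V ∘ e.symm, hV.comp_equiv e.symm⟩

theorem of_measure_eq_zero (hS : volume S = 0) : HasSimplicialFan S :=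
  ⟨Empty, inferInstance, Empty.elim, ⟨fun l => l.elim, fun l => l.elim, fun l => l.elim,
    measure_mono_null Set.sdiff_subset hS⟩⟩

theorem infiniteSimplex {V : Fin n → Fin n → ℝ} (hV : LinearIndependent ℝ V) :
    HasSimplicialFan (InfiniteSimplex V) :=
  ⟨Unit, inferInstance, fun _ => V, ⟨fun _ => hV, fun _ _ h => (h rfl).elim,
    fun _ => subset_rfl, by rw [Set.iUnion_const, Set.sdiff_self, measure_empty]⟩⟩

theorem image (h : HasSimplicialFan S) (T : (Fin n → ℝ) ≃ₗ[ℝ] Fin n → ℝ) :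
    HasSimplicialFan (T '' S) := by
  obtain ⟨ι, _, V, hV⟩ := h
  have hT (l : ι) : InfiniteSimplex (T ∘ V l) = T '' InfiniteSimplex (V l) :=
    infiniteSimplex_comp T.toLinearMap (V l)
  refine ⟨ι, inferInstance, fun l => T ∘ V l, ⟨fun l => ?_, fun l l' hll' => ?_,
    fun l => ?_, ?_⟩⟩
  · exact (hV.linearIndependent l).map' T.toLinearMap T.ker
  · dsimp only
    rw [hT, hT, Set.disjoint_image_iff T.injective]
    exact hV.pairwise_disjoint hll'
  · exact (hT l).trans_subset (Set.image_mono (hV.subset l))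
  · simp only [hT, ← Set.image_iUnion, ← Set.image_sdiff T.injective]
    rw [← LinearEquiv.coe_coe, Measure.addHaar_image_linearMap, hV.measure_diff_iUnion,
      mul_zero]

theorem of_subset_of_measure_diff {S' : Set (Fin n → ℝ)} (h : HasSimplicialFan S')
    (hS' : S' ⊆ S) (hdiff : volume (S \ S') = 0) : HasSimplicialFan S := by
  obtain ⟨ι, _, V, hV⟩ := h
  refine ⟨ι, inferInstance, V, ⟨hV.linearIndependent, hV.pairwise_disjoint,
    fun l => (hV.subset l).trans hS', ?_⟩⟩
  refine measure_mono_null (fun x hx => ?_) (measure_union_null hdiff hV.measure_diff_iUnion)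
  by_cases hxS' : x ∈ S'
  exacts [Or.inr ⟨hxS', hx.2⟩, Or.inl ⟨hx.1, hxS'⟩]

theorem iUnion {κ : Type} [Finite κ] {S : κ → Set (Fin n → ℝ)}
    (hS : Pairwise (Disjoint on S)) (h : ∀ i, HasSimplicialFan (S i)) :
    HasSimplicialFan (⋃ i, S i) := by
  choose ι _ V hV using h
  refine ⟨Σ i, ι i, inferInstance, fun l => V l.1 l.2, ⟨fun l => (hV l.1).linearIndependent l.2,
    ?_, fun l => (hV l.1).subset l.2 |>.trans (Set.subset_iUnion S l.1), ?_⟩⟩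
  · rintro ⟨i, a⟩ ⟨j, b⟩ hab
    rcases eq_or_ne i j with rfl | hij
    · exact (hV i).pairwise_disjoint fun h => hab (congrArg _ h)
    · exact (hS hij).mono ((hV i).subset a) ((hV j).subset b)
  · refine measure_mono_null (fun x hx => ?_)
      (measure_iUnion_null fun i => (hV i).measure_diff_iUnion)
    obtain ⟨i, hi⟩ := Set.mem_iUnion.1 hx.1
    refine Set.mem_iUnion.2 ⟨i, hi, fun hx' => hx.2 ?_⟩
    obtain ⟨a, ha⟩ := Set.mem_iUnion.1 hx'
    exact Set.mem_iUnion.2 ⟨⟨i, a⟩, ha⟩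

theorem union {T : Set (Fin n → ℝ)} (hS : HasSimplicialFan S) (hT : HasSimplicialFan T)
    (hST : Disjoint S T) : HasSimplicialFan (S ∪ T) := by
  rw [Set.union_eq_iUnion]
  exact iUnion (pairwise_disjoint_on_bool.2 hST) (Bool.forall_bool.2 ⟨hT, hS⟩)

end HasSimplicialFan

def coordTransvection (p q : Fin n) (hpq : p ≠ q) (t : ℝ) : (Fin n → ℝ) ≃ₗ[ℝ] Fin n → ℝ :=
  LinearEquiv.transvection (f := LinearMap.proj q) (v := t • Pi.single p 1) (by simp [hpq])

theorem coordTransvection_apply (p q : Fin n) (hpq : p ≠ q) (t : ℝ) (x : Fin n → ℝ) :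
    coordTransvection p q hpq t x = x + (t * x q) • Pi.single p 1 := by
  simp [coordTransvection, LinearMap.transvection.apply, smul_smul, mul_comm]

theorem coordTransvection_symm (p q : Fin n) (hpq : p ≠ q) (t : ℝ) :
    (coordTransvection p q hpq t).symm = coordTransvection p q hpq (-t) := by
  rw [coordTransvection, coordTransvection,
    LinearEquiv.transvection.symm_eq _ (by simp [hpq])]
  congr 1
  simp

theorem coordTransvection_single_of_ne {p q k : Fin n} (hpq : p ≠ q) (t : ℝ) (hk : k ≠ q) :
    coordTransvection p q hpq t (Pi.single k 1) = Pi.single k 1 := by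
  simp [coordTransvection_apply, hk.symm]

theorem coordTransvection_single_self {p q : Fin n} (hpq : p ≠ q) (t : ℝ) :
    coordTransvection p q hpq t (Pi.single q 1) = Pi.single q 1 + t • Pi.single p 1 := by
  simp [coordTransvection_apply]

theorem image_coordTransvection_orthant {p q : Fin n} (hpq : p ≠ q) {t : ℝ} (ht : 0 ≤ t) :
    coordTransvection p q hpq t '' {x | ∀ k, 0 < x k} =
      {x | (∀ k, 0 < x k) ∧ t * x q < x p} := by
  ext x
  have hcoord (k : Fin n) :
      coordTransvection p q hpq (-t) x k = if k = p then x p - t * x q else x k := by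
    split_ifs with hk <;> simp [coordTransvection_apply, hk, sub_eq_add_neg]
  simp only [LinearEquiv.image_eq_preimage_symm, coordTransvection_symm, Set.mem_preimage,
    Set.mem_ofPred_eq, hcoord]
  constructor
  · intro h
    have hp : 0 < x p - t * x q := by simpa using h p
    have hq : 0 < x q := by simpa [hpq.symm] using h q
    refine ⟨fun k => ?_, by linarith⟩
    rcases eq_or_ne k p with rfl | hk
    · nlinarith
    · simpa [hk] using h k
  · rintro ⟨h, htx⟩ k
    split_ifs
    exacts [sub_pos.2 htx, h k]

theorem image_coordTransvection_orthant_subset {p q : Fin n} (hpq : p ≠ q) {t : ℝ}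
    (ht : 0 ≤ t) :
    coordTransvection p q hpq t '' {x | ∀ k, 0 < x k} ⊆ {x | ∀ k, 0 < x k} := by
  rw [image_coordTransvection_orthant hpq ht]
  exact fun x hx => hx.1

theorem disjoint_image_coordTransvection_orthant {p q : Fin n} (hpq : p ≠ q) {t : ℝ}
    (ht : 0 < t) :
    Disjoint (coordTransvection p q hpq t '' {x | ∀ k, 0 < x k})
      (coordTransvection q p hpq.symm t⁻¹ '' {x | ∀ k, 0 < x k}) := by
  rw [image_coordTransvection_orthant hpq ht.le,
    image_coordTransvection_orthant hpq.symm (inv_nonneg.2 ht.le), Set.disjoint_left]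
  rintro x ⟨-, h₁⟩ ⟨-, h₂⟩
  rw [inv_mul_lt_iff₀ ht] at h₂
  linarith

theorem measure_orthant_diff_image_coordTransvection {p q : Fin n} (hpq : p ≠ q) {t : ℝ}
    (ht : 0 < t) :
    volume ({x : Fin n → ℝ | ∀ k, 0 < x k} \
      (coordTransvection p q hpq t '' {x | ∀ k, 0 < x k} ∪
        coordTransvection q p hpq.symm t⁻¹ '' {x | ∀ k, 0 < x k})) = 0 := by
  have hg : LinearMap.proj p - t • LinearMap.proj q ≠ (0 : Dual ℝ (Fin n → ℝ)) := fun h => by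
    simpa [hpq.symm] using LinearMap.congr_fun h (Pi.single p 1)
  refine measure_mono_null (fun x hx => ?_) (addHaar_setOf_apply_eq_zero volume hg)
  rw [image_coordTransvection_orthant hpq ht.le,
    image_coordTransvection_orthant hpq.symm (inv_nonneg.2 ht.le)] at hx
  obtain ⟨hx, hx'⟩ := hx
  simp only [Set.mem_union, Set.mem_ofPred_eq, not_or, not_and, not_lt] at hx'
  have h₁ := hx'.1 hx
  have h₂ := hx'.2 hx
  rw [le_inv_mul_iff₀ ht] at h₂
  simp only [Set.mem_ofPred_eq, LinearMap.sub_apply, LinearMap.smul_apply, LinearMap.proj_apply,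
    smul_eq_mul]
  linarith

theorem hasSimplicialFan_orthant_inter_of_transvections {H : Set (Fin n → ℝ)} {p q : Fin n}
    (hpq : p ≠ q) {t : ℝ} (ht : 0 < t)
    (h₁ : HasSimplicialFan (coordTransvection p q hpq t '' {x | ∀ k, 0 < x k} ∩ H))
    (h₂ : HasSimplicialFan (coordTransvection q p hpq.symm t⁻¹ '' {x | ∀ k, 0 < x k} ∩ H)) :
    HasSimplicialFan ({x | ∀ k, 0 < x k} ∩ H) := by
  refine (h₁.union h₂ ?_).of_subset_of_measure_diff ?_ ?_
  · exact (disjoint_image_coordTransvection_orthant hpq ht).mono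
      Set.inter_subset_left Set.inter_subset_left
  · exact Set.union_subset
      (Set.inter_subset_inter_left _ (image_coordTransvection_orthant_subset hpq ht.le))
      (Set.inter_subset_inter_left _
        (image_coordTransvection_orthant_subset hpq.symm (inv_nonneg.2 ht.le)))
  · refine measure_mono_null ?_ (measure_orthant_diff_image_coordTransvection hpq ht)
    rintro x ⟨⟨hx, hxH⟩, hx'⟩
    exact ⟨hx, fun h => hx' (h.imp (fun h => ⟨h, hxH⟩) fun h => ⟨h, hxH⟩)⟩

theorem card_support_comp_lt {g : Dual ℝ (Fin n → ℝ)} {T : (Fin n → ℝ) →ₗ[ℝ] Fin n → ℝ}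
    {r : Fin n} (hr : g (Pi.single r 1) ≠ 0) (hTr : g (T (Pi.single r 1)) = 0)
    (hT : ∀ k ≠ r, T (Pi.single k 1) = Pi.single k 1) :
    #{k | g (T (Pi.single k 1)) ≠ 0} < #{k | g (Pi.single k 1) ≠ 0} := by
  refine card_lt_card ((ssubset_iff_of_subset fun k hk => ?_).2 ⟨r, by simp [hr], by simp [hTr]⟩)
  have hkr : k ≠ r := by
    rintro rfl
    simp [hTr] at hk
  simpa [hT k hkr] using hk

theorem hasSimplicialFan_orthant_inter_halfspace (g : Dual ℝ (Fin n → ℝ)) :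
    HasSimplicialFan ({x | ∀ k, 0 < x k} ∩ {x | 0 < g x}) := by
  induction hN : #{k | g (Pi.single k 1) ≠ 0} using Nat.strong_induction_on generalizing g with
  | _ N ih =>
  subst hN
  by_cases hsplit : ∃ p q, 0 < g (Pi.single p 1) ∧ g (Pi.single q 1) < 0
  · obtain ⟨p, q, hp, hq⟩ := hsplit
    have hpq : p ≠ q := by
      rintro rfl
      linarith
    have piece (p q : Fin n) (hpq : p ≠ q) (t : ℝ) (hq : g (Pi.single q 1) ≠ 0)
        (ht : g (Pi.single q 1) + t * g (Pi.single p 1) = 0) :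
        HasSimplicialFan (coordTransvection p q hpq t '' {x | ∀ k, 0 < x k} ∩ {x | 0 < g x}) := by
      rw [← Set.image_inter_preimage]
      refine (ih _ ?_ (g ∘ₗ (coordTransvection p q hpq t).toLinearMap) rfl).image _
      refine card_support_comp_lt hq ?_ fun k hk => coordTransvection_single_of_ne hpq t hk
      simpa [coordTransvection_single_self] using ht
    obtain ⟨t, ht, htg⟩ : ∃ t : ℝ, 0 < t ∧ t * g (Pi.single p 1) = -g (Pi.single q 1) :=
      ⟨_, div_pos (neg_pos.2 hq) hp, div_mul_cancel₀ _ hp.ne'⟩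
    exact hasSimplicialFan_orthant_inter_of_transvections hpq ht
      (piece p q hpq t hq.ne (by linarith))
      (piece q p hpq.symm t⁻¹ hp.ne' (by field_simp; linarith))
  push Not at hsplit
  by_cases hpos : ∃ p, 0 < g (Pi.single p 1)
  · obtain ⟨p, hp⟩ := hpos
    have : {x | ∀ k, 0 < x k} ∩ {x | 0 < g x} = {x | ∀ k, 0 < x k} := by
      refine Set.inter_eq_left.2 fun x hx => ?_
      rw [Set.mem_ofPred_eq, g.apply_eq_sum_mul]
      exact sum_pos' (fun k _ => mul_nonneg (hx k).le (hsplit p k hp))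
        ⟨p, mem_univ _, mul_pos (hx p) hp⟩
    rw [this, ← infiniteSimplex_basisFun]
    exact .infiniteSimplex (Pi.basisFun ℝ _).linearIndependent
  · push Not at hpos
    have : {x | ∀ k, 0 < x k} ∩ {x | 0 < g x} = ∅ := by
      refine Set.eq_empty_of_forall_notMem fun x ⟨hx, hgx⟩ => ?_
      rw [Set.mem_ofPred_eq, g.apply_eq_sum_mul] at hgx
      exact hgx.not_ge (sum_nonpos fun k _ => mul_nonpos_of_nonneg_of_nonpos (hx k).le (hpos k))
    rw [this]
    exact .of_measure_eq_zero measure_empty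

theorem hasSimplicialFan_infiniteSimplex_inter_halfspace {V : Fin n → Fin n → ℝ}
    (hV : LinearIndependent ℝ V) (g : Dual ℝ (Fin n → ℝ)) :
    HasSimplicialFan (InfiniteSimplex V ∩ {x | 0 < g x}) := by
  let T := LinearEquiv.ofInjectiveEndo _ hV.fintypeLinearCombination_injective
  rw [show InfiniteSimplex V = T '' {x | ∀ k, 0 < x k} from infiniteSimplex_eq_image V,
    ← Set.image_inter_preimage]
  exact (hasSimplicialFan_orthant_inter_halfspace (g ∘ₗ T.toLinearMap)).image T

namespace HasSimplicialFan

variable {S : Set (Fin n → ℝ)}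

theorem inter_halfspace (h : HasSimplicialFan S) (g : Dual ℝ (Fin n → ℝ)) :
    HasSimplicialFan (S ∩ {x | 0 < g x}) := by
  obtain ⟨ι, _, V, hV⟩ := h
  refine (iUnion (fun l l' hll' => (hV.pairwise_disjoint hll').mono Set.inter_subset_left
      Set.inter_subset_left) fun l => hasSimplicialFan_infiniteSimplex_inter_halfspace
        (hV.linearIndependent l) g).of_subset_of_measure_diff
    (Set.iUnion_subset fun l => Set.inter_subset_inter_left _ (hV.subset l)) ?_
  rw [← Set.iUnion_inter]
  refine measure_mono_null ?_ hV.measure_diff_iUnion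
  rintro x ⟨⟨hxS, hgx⟩, hx⟩
  exact ⟨hxS, fun hx' => hx ⟨hx', hgx⟩⟩

theorem inter_ne_zero (h : HasSimplicialFan S) (g : Dual ℝ (Fin n → ℝ)) :
    HasSimplicialFan (S ∩ {x | g x ≠ 0}) := by
  have : S ∩ {x | g x ≠ 0} = S ∩ {x | 0 < g x} ∪ S ∩ {x | 0 < (-g) x} := by
    ext x
    simp only [Set.mem_inter_iff, Set.mem_union, Set.mem_ofPred_eq, LinearMap.neg_apply, neg_pos]
    rw [ne_iff_lt_or_gt, and_or_left, or_comm]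
  rw [this]
  refine (h.inter_halfspace g).union (h.inter_halfspace (-g)) ?_
  refine Set.disjoint_left.2 fun x hx hx' => ?_
  have h₁ : 0 < g x := hx.2
  have h₂ : 0 < -g x := hx'.2
  linarith

end HasSimplicialFan

theorem hasSimplicialFan_univ : HasSimplicialFan (Set.univ : Set (Fin n → ℝ)) := by
  refine ⟨{σ : Fin n → SignType // ∀ j, σ j ≠ 0}, inferInstance,
    fun σ j => Pi.single j (σ.1 j : ℝ), ⟨fun σ => ?_, fun σ τ hστ => ?_,
    fun _ => Set.subset_univ _, ?_⟩⟩
  · refine Pi.linearIndependent_single_of_ne_zero fun j => ?_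
    have := σ.2 j
    generalize σ.1 j = s at this
    cases s <;> simp_all
  · dsimp only
    rw [infiniteSimplex_single_sign σ.2, infiniteSimplex_single_sign τ.2]
    exact Set.disjoint_left.2 fun x hx hx' =>
      hστ (Subtype.ext (funext fun j => (hx j).symm.trans (hx' j)))
  · have hproj (j : Fin n) : LinearMap.proj j ≠ (0 : Dual ℝ (Fin n → ℝ)) := fun h => by
      simpa using LinearMap.congr_fun h (Pi.single j 1)
    refine measure_mono_null (fun x hx => ?_)
      (measure_iUnion_null fun j => addHaar_setOf_apply_eq_zero volume (hproj j))
    by_contra hx₀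
    simp only [Set.mem_iUnion, not_exists, Set.mem_ofPred_eq, LinearMap.proj_apply] at hx₀
    refine hx.2 (Set.mem_iUnion.2
      ⟨⟨fun j => SignType.sign (x j), fun j => sign_ne_zero.2 (hx₀ j)⟩, ?_⟩)
    rw [infiniteSimplex_single_sign fun j => sign_ne_zero.2 (hx₀ j)]
    exact fun j => rfl

theorem hasSimplicialFan_setOf_forall_ne_zero {ι : Type*} [Fintype ι]
    (φ : ι → Dual ℝ (Fin n → ℝ)) : HasSimplicialFan {x | ∀ i, φ i x ≠ 0} := by
  classical
  have (s : Finset ι) : HasSimplicialFan {x | ∀ i ∈ s, φ i x ≠ 0} := by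
    induction s using Finset.induction_on with
    | empty => simpa using hasSimplicialFan_univ
    | insert a s ha ih =>
      convert ih.inter_ne_zero (φ a) using 1
      ext x
      simp [and_comm]
  simpa using this univ

end

/-- Every piecewise linear function can be decomposed over finitely many pairwise
disjoint infinite simplices, covering `ℝ^n` up to a Lebesgue-null set, on each of
which it is linear; consequently it equals the sum of the corresponding
"single-simplex" linear pieces on the union of the simplices, hence almost
everywhere. -/
theorem isPiecewiseLinear_simplex_decomposition {n : ℕ} (f : (Fin n → ℝ) → ℝ)
    (hf : IsPiecewiseLinear f) :
    ∃ (L : ℕ) (V : Fin L → Fin n → (Fin n → ℝ)) (w : Fin L → (Fin n → ℝ)),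
      (∀ l, LinearIndependent ℝ (V l)) ∧
      (Pairwise fun l l' => Disjoint (InfiniteSimplex (V l)) (InfiniteSimplex (V l'))) ∧
      volume ((⋃ l, InfiniteSimplex (V l))ᶜ) = 0 ∧
      (∀ l, ∀ x ∈ InfiniteSimplex (V l), f x = ∑ j, w l j * x j) ∧
      (∀ x ∈ ⋃ l, InfiniteSimplex (V l),
        f x = ∑ l, Set.indicator (InfiniteSimplex (V l)) (fun y => ∑ j, w l j * y j) x) := by
  obtain ⟨-, k, φ, hφ, hlin⟩ := hf
  obtain ⟨L, V, hV⟩ := (hasSimplicialFan_setOf_forall_ne_zero φ).exists_fin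
  have hw (l : Fin L) : ∃ w : Fin n → ℝ, ∀ x ∈ InfiniteSimplex (V l), f x = ∑ j, w j * x j := by
    obtain ⟨w, hw⟩ := hlin _ (hV.subset l (sum_mem_infiniteSimplex (V l)))
    exact ⟨w, fun x hx => hw x <| (convex_infiniteSimplex (V l)).isPreconnected
      |>.subset_connectedComponentIn (sum_mem_infiniteSimplex (V l)) (hV.subset l) hx⟩
  choose w hw using hw
  refine ⟨L, V, w, hV.linearIndependent, hV.pairwise_disjoint, hV.measure_compl_iUnion ?_, hw,
    fun x hx => ?_⟩
  · simpa only [Set.compl_ofPred, not_forall, not_not, Set.ofPred_exists] using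
      measure_iUnion_null fun i => addHaar_setOf_apply_eq_zero volume (hφ i)
  · obtain ⟨l, hl⟩ := Set.mem_iUnion.1 hx
    rw [sum_indicator_of_pairwise_disjoint hV.pairwise_disjoint _ hl, hw l x hl]
end

section
/- Let n ≥ 1 and let Δ_n = {x ∈ ℝ^n : x_i > 0 for all i and Σ_{i=1}^n x_i < 1} be the open standard simplex. Let ω ∈ ℝ^n have all components nonzero and pairwise distinct, and set ω_0 = 0. Then the Fourier transform of the indicator function of Δ_n at ω satisfies (2π)^{−n/2} ∫_{Δ_n} e^{−i x⋅ω} dx = (−i/√(2π))^n Σ_{r=0}^n e^{−i ω_r} / ∏_{r'≠r, 0≤r'≤n} (ω_{r'} − ω_r). -/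
/-!
Write `J(ω) = ∫_{Δ_n} e^{-i x⋅ω} dx`. Integrating out the first coordinate `x₁ = t`, which
ranges over `(0, 1 - ∑ y)` for `y` in the lower-dimensional simplex, gives the recursion
`-i ω₁ J(ω) = e^{-i ω₁} J(ω' - ω₁) - J(ω')`, where `ω'` is `ω` with `ω₁` dropped.
The right-hand side is `(-i)^n` times a divided difference of `x ↦ e^{-i x}` at the nodes
`0, ω₁, …, ω_n`; the recurrence of divided differences, applied to the nodes `0` and `ω₁`,
together with their translation covariance, shows that it obeys the same recursion, and both
sides equal `1` for `n = 0`.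
-/

open MeasureTheory Finset Function Complex
open Matrix (vecCons)

/-- `(-1)^(k-1)` times the divided difference `f[p 0, …, p (k-1)]`. -/
noncomputable def dividedDiff (f : ℝ → ℂ) {k : ℕ} (p : Fin k → ℝ) : ℂ :=
  ∑ r, f (p r) / ((∏ r' ∈ univ.erase r, (p r' - p r) : ℝ) : ℂ)

section dividedDiff

variable (f : ℝ → ℂ) {k : ℕ}

lemma dividedDiff_const_mul (a : ℂ) (p : Fin k → ℝ) :
    dividedDiff (fun x => a * f x) p = a * dividedDiff f p := by
  simp only [dividedDiff, mul_sum, mul_div_assoc]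

lemma dividedDiff_add_const (p : Fin k → ℝ) (c : ℝ) :
    dividedDiff f (fun r => p r + c) = dividedDiff (fun x => f (x + c)) p := by
  simp only [dividedDiff, add_sub_add_right_eq_sub]

lemma dividedDiff_fin_one (p : Fin 1 → ℝ) : dividedDiff f p = f (p 0) := by
  simp [dividedDiff]

lemma dividedDiff_comp_succAbove {p : Fin (k + 1) → ℝ} (hp : Injective p) (j : Fin (k + 1)) :
    dividedDiff f (p ∘ j.succAbove) =
      ∑ s, ((p j - p s : ℝ) : ℂ) *
        (f (p s) / ((∏ r ∈ univ.erase s, (p r - p s) : ℝ) : ℂ)) := by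
  rw [Fin.sum_univ_succAbove _ j, sub_self, ofReal_zero, zero_mul, zero_add]
  refine sum_congr rfl fun r _ => ?_
  have hjs : j ≠ j.succAbove r := (Fin.succAbove_ne j r).symm
  have hprod : ∏ r' ∈ univ.erase r, (p (j.succAbove r') - p (j.succAbove r)) =
      ∏ t ∈ (univ.erase (j.succAbove r)).erase j, (p t - p (j.succAbove r)) := by
    rw [← prod_image (f := fun t => p t - p (j.succAbove r))
      (fun a _ b _ h => Fin.succAbove_right_injective h),
      image_erase Fin.succAbove_right_injective, Fin.image_succAbove_univ,
      compl_singleton, erase_right_comm]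
  have hne : p j - p (j.succAbove r) ≠ 0 := sub_ne_zero.2 (hp.ne hjs)
  rw [← mul_prod_erase _ _ (mem_erase.2 ⟨hjs, mem_univ _⟩)]
  simp only [comp_apply, hprod]
  push_cast
  rw [mul_div_assoc', mul_div_mul_left _ _ (by exact_mod_cast hne)]

lemma sub_mul_dividedDiff {p : Fin (k + 1) → ℝ} (hp : Injective p) (i j : Fin (k + 1)) :
    ((p j - p i : ℝ) : ℂ) * dividedDiff f p =
      dividedDiff f (p ∘ j.succAbove) - dividedDiff f (p ∘ i.succAbove) := by
  rw [dividedDiff_comp_succAbove f hp, dividedDiff_comp_succAbove f hp, ← sum_sub_distrib,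
    dividedDiff, mul_sum]
  refine sum_congr rfl fun s _ => ?_
  push_cast
  ring

lemma vecCons_zero_comp_one_succAbove (ω : Fin (k + 1) → ℝ) :
    vecCons 0 ω ∘ (1 : Fin (k + 2)).succAbove = vecCons 0 (Fin.tail ω) := by
  ext r
  cases r using Fin.cases <;> rfl

lemma vecCons_zero_sub (ω : Fin (k + 1) → ℝ) :
    vecCons 0 (fun i => ω i.succ - ω 0) = fun r => ω r - ω 0 := by
  ext r
  cases r using Fin.cases <;> simp

lemma dividedDiff_vecCons_zero {ω : Fin (k + 1) → ℝ} (hω : Injective (vecCons 0 ω)) :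
    (ω 0 : ℂ) * dividedDiff f (vecCons 0 ω) =
      dividedDiff f (vecCons 0 (Fin.tail ω)) -
        dividedDiff (fun x => f (x + ω 0)) (vecCons 0 fun i => ω i.succ - ω 0) := by
  have hω_shift : vecCons 0 ω ∘ (0 : Fin (k + 2)).succAbove =
      fun r => vecCons 0 (fun i => ω i.succ - ω 0) r + ω 0 := by
    ext r
    simp [vecCons_zero_sub]
  simpa [← dividedDiff_add_const, ← hω_shift, vecCons_zero_comp_one_succAbove]
    using sub_mul_dividedDiff f hω 0 1

end dividedDiff

theorem integral_fin_cons {E : Type*} [NormedAddCommGroup E] [NormedSpace ℝ E] {m : ℕ}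
    {F : (Fin (m + 1) → ℝ) → E} (hF : Integrable F) :
    ∫ x, F x = ∫ y : Fin m → ℝ, ∫ t : ℝ, F (Fin.cons t y) := by
  have e := (volume_preserving_piFinSuccAbove (fun _ : Fin (m + 1) => ℝ) 0).symm
  rw [← e.integral_comp', Measure.volume_eq_prod, integral_prod_symm]
  · simp [MeasurableEquiv.piFinSuccAbove_symm_apply, Fin.insertNthEquiv, Fin.insertNth_zero']
  · rw [← Measure.volume_eq_prod]
    exact (e.integrable_comp_emb (MeasurableEquiv.measurableEmbedding _)).2 hF

def openSimplex (n : ℕ) : Set (Fin n → ℝ) := {x | (∀ i, 0 < x i) ∧ ∑ i, x i < 1}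

lemma measurableSet_openSimplex (n : ℕ) : MeasurableSet (openSimplex n) := by
  rw [openSimplex, Set.ofPred_and, Set.ofPred_forall]
  exact (MeasurableSet.iInter fun i =>
      measurableSet_lt measurable_const (measurable_pi_apply i)).inter
    (measurableSet_lt (measurable_sum _ fun i _ => measurable_pi_apply i) measurable_const)

lemma volume_openSimplex_lt_top (n : ℕ) : volume (openSimplex n) < ⊤ := by
  refine Bornology.IsBounded.measure_lt_top ((Metric.isBounded_Icc (0 : Fin n → ℝ) 1).subset ?_)
  intro x ⟨hpos, hsum⟩
  exact ⟨fun i => (hpos i).le, fun i =>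
    ((single_le_sum (fun j _ => (hpos j).le) (mem_univ i)).trans hsum.le)⟩

lemma cons_mem_openSimplex_iff {m : ℕ} (t : ℝ) (y : Fin m → ℝ) :
    (Fin.cons t y : Fin (m + 1) → ℝ) ∈ openSimplex (m + 1) ↔
      y ∈ openSimplex m ∧ t ∈ Set.Ioo 0 (1 - ∑ i, y i) := by
  simp only [openSimplex, Set.mem_ofPred_eq, Fin.forall_fin_succ, Fin.sum_univ_succ,
    Fin.cons_zero, Fin.cons_succ, Set.mem_Ioo]
  constructor
  · rintro ⟨⟨ht, hy⟩, hsum⟩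
    have hsum_nonneg : 0 ≤ ∑ i, y i := sum_nonneg fun i _ => (hy i).le
    exact ⟨⟨hy, by linarith⟩, ht, by linarith⟩
  · rintro ⟨⟨hy, -⟩, ht, hsum⟩
    exact ⟨⟨ht, hy⟩, by linarith⟩

theorem setIntegral_openSimplex_succ {E : Type*} [NormedAddCommGroup E] [NormedSpace ℝ E]
    {m : ℕ} {f : (Fin (m + 1) → ℝ) → E} (hf : IntegrableOn f (openSimplex (m + 1))) :
    ∫ x in openSimplex (m + 1), f x =
      ∫ y in openSimplex m, ∫ t in (0 : ℝ)..1 - ∑ i, y i, f (Fin.cons t y) := by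
  have hslice : ∀ y, ∫ t, (openSimplex (m + 1)).indicator f (Fin.cons t y) =
      (openSimplex m).indicator
        (fun y => ∫ t in (0 : ℝ)..1 - ∑ i, y i, f (Fin.cons t y)) y := by
    intro y
    by_cases hy : y ∈ openSimplex m
    · have hle : (0 : ℝ) ≤ 1 - ∑ i, y i := sub_nonneg.2 hy.2.le
      simp only [Set.indicator, cons_mem_openSimplex_iff, hy, true_and, if_true]
      rw [intervalIntegral.integral_of_le hle, integral_Ioc_eq_integral_Ioo,
        ← integral_indicator measurableSet_Ioo]
      simp only [Set.indicator]
    · simp [Set.indicator, cons_mem_openSimplex_iff, hy]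
  rw [← integral_indicator (measurableSet_openSimplex _),
    integral_fin_cons ((integrable_indicator_iff (measurableSet_openSimplex _)).2 hf)]
  simp only [hslice]
  exact integral_indicator (measurableSet_openSimplex _)

lemma mul_integral_exp_mul_complex (c : ℂ) (a b : ℝ) :
    c * ∫ x in a..b, cexp (c * x) = cexp (c * b) - cexp (c * a) := by
  rcases eq_or_ne c 0 with rfl | hc
  · simp
  · rw [integral_exp_mul_complex hc, mul_div_cancel₀ _ hc]

noncomputable def fourierSimplex {n : ℕ} (ω : Fin n → ℝ) : ℂ :=
  ∫ x in openSimplex n, cexp (-I * ((∑ i, x i * ω i : ℝ) : ℂ))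

lemma integrableOn_openSimplex_exp {n : ℕ} (ω : Fin n → ℝ) :
    IntegrableOn (fun x => cexp (-I * ((∑ i, x i * ω i : ℝ) : ℂ))) (openSimplex n) := by
  refine Measure.integrableOn_of_bounded (M := 1) (volume_openSimplex_lt_top n).ne
    (Continuous.aestronglyMeasurable (by fun_prop)) (Filter.Eventually.of_forall fun x => ?_)
  rw [norm_exp]
  simp

lemma fourierSimplex_zero (ω : Fin 0 → ℝ) : fourierSimplex ω = 1 := by
  have : openSimplex 0 = Set.univ := by
    ext x
    simp [openSimplex]
  simp [fourierSimplex, this, measureReal_def, volume_pi]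

lemma fourierSimplex_succ {m : ℕ} (ω : Fin (m + 1) → ℝ) :
    -I * ω 0 * fourierSimplex ω =
      cexp (-I * ω 0) * fourierSimplex (fun i => ω i.succ - ω 0) -
        fourierSimplex (Fin.tail ω) := by
  have hslice : fourierSimplex ω = ∫ y in openSimplex m,
      cexp (-I * ((∑ i, y i * ω i.succ : ℝ) : ℂ)) * ∫ t in (0 : ℝ)..1 - ∑ i, y i,
        cexp (-I * ω 0 * t) := by
    rw [fourierSimplex, setIntegral_openSimplex_succ (integrableOn_openSimplex_exp ω)]
    refine setIntegral_congr_fun (measurableSet_openSimplex m) fun y _ => ?_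
    rw [← intervalIntegral.integral_const_mul]
    refine intervalIntegral.integral_congr fun t _ => ?_
    rw [← exp_add, Fin.sum_univ_succ]
    push_cast
    simp only [Fin.cons_zero, Fin.cons_succ]
    ring_nf
  calc -I * ω 0 * fourierSimplex ω
      = ∫ y in openSimplex m, cexp (-I * ((∑ i, y i * ω i.succ : ℝ) : ℂ)) *
          (-I * ω 0 * ∫ t in (0 : ℝ)..1 - ∑ i, y i, cexp (-I * ω 0 * t)) := by
        rw [hslice, ← integral_const_mul]
        congr with y
        ring
    _ = ∫ y in openSimplex m, (cexp (-I * ω 0) *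
          cexp (-I * ((∑ i, y i * (ω i.succ - ω 0) : ℝ) : ℂ)) -
          cexp (-I * ((∑ i, y i * Fin.tail ω i : ℝ) : ℂ))) := by
        congr with y
        rw [mul_integral_exp_mul_complex, mul_sub, ← exp_add, ← exp_add, ← exp_add]
        congr 2
        · push_cast
          simp only [mul_sub, sum_sub_distrib, ← sum_mul]
          ring
        · simp [Fin.tail]
    _ = _ := by
        rw [integral_sub ((integrableOn_openSimplex_exp _).const_mul _)
          (integrableOn_openSimplex_exp _), integral_const_mul]
        rfl

theorem fourierSimplex_eq_dividedDiff {n : ℕ} (ω : Fin n → ℝ)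
    (hω : Injective (vecCons 0 ω)) :
    fourierSimplex ω = (-I) ^ n * dividedDiff (fun x => cexp (-I * x)) (vecCons 0 ω) := by
  induction n with
  | zero => simp [fourierSimplex_zero, dividedDiff_fin_one]
  | succ m ih =>
    have hω0 : ω 0 ≠ 0 := fun h => hω.ne (Fin.succ_ne_zero 0) (by simp [h])
    have htail : Injective (vecCons 0 (Fin.tail ω)) := by
      rw [← vecCons_zero_comp_one_succAbove]
      exact hω.comp Fin.succAbove_right_injective
    have hshift : Injective (vecCons 0 fun i => ω i.succ - ω 0) := by
      rw [vecCons_zero_sub]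
      exact sub_left_injective.comp (hω.comp (Fin.succ_injective _))
    have hrec := dividedDiff_vecCons_zero (fun x => cexp (-I * x)) hω
    have hexp_shift : (fun x : ℝ => cexp (-I * ↑(x + ω 0))) =
        fun x : ℝ => cexp (-I * ω 0) * cexp (-I * x) := by
      ext x
      rw [← exp_add]
      push_cast
      ring_nf
    rw [hexp_shift, dividedDiff_const_mul] at hrec
    refine mul_left_cancel₀ (mul_ne_zero (neg_ne_zero.2 I_ne_zero) (ofReal_ne_zero.2 hω0)) ?_
    rw [fourierSimplex_succ, ih _ hshift, ih _ htail]
    linear_combination (-I) ^ m * hrec -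
      ((-I) ^ m * ω 0 * dividedDiff (fun x => cexp (-I * x)) (vecCons 0 ω)) * I_mul_I

theorem fourier_indicator_simplex_general {n : ℕ} (ω : Fin n → ℝ)
    (hω0 : ∀ i, ω i ≠ 0) (hωinj : Function.Injective ω) :
    (1 / (Real.sqrt (2 * Real.pi) : ℂ)) ^ n *
        ∫ x in {x : Fin n → ℝ | (∀ i, 0 < x i) ∧ ∑ i, x i < 1},
          Complex.exp (-Complex.I * ((∑ i, x i * ω i : ℝ) : ℂ)) =
      (-Complex.I / (Real.sqrt (2 * Real.pi) : ℂ)) ^ n *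
        ∑ r : Fin (n + 1),
          Complex.exp (-Complex.I * ((Matrix.vecCons (0 : ℝ) ω r : ℝ) : ℂ)) /
            ((∏ r' ∈ Finset.univ.erase r,
                (Matrix.vecCons (0 : ℝ) ω r' - Matrix.vecCons (0 : ℝ) ω r) : ℝ) : ℂ) := by
  have hω : Injective (vecCons 0 ω) :=
    Fin.cons_injective_iff.2 ⟨fun ⟨i, hi⟩ => hω0 i hi, hωinj⟩
  have h := fourierSimplex_eq_dividedDiff ω hω
  rw [fourierSimplex, openSimplex, dividedDiff] at h
  rw [h, div_eq_mul_inv, div_eq_mul_inv, mul_pow, mul_pow]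
  ring

/-- Fourier transform of the indicator function of the open standard simplex
`Δ_n = {x : 0 < x_i, ∑ x_i < 1}` at a frequency `ω` with nonzero, pairwise distinct
components, where `ω_0 = 0` is adjoined as the zeroth extended component. -/
theorem fourier_indicator_simplex {n : ℕ} (hn : 1 ≤ n) (ω : Fin n → ℝ)
    (hω0 : ∀ i, ω i ≠ 0) (hωinj : Function.Injective ω) :
    (1 / (Real.sqrt (2 * Real.pi) : ℂ)) ^ n *
        ∫ x in {x : Fin n → ℝ | (∀ i, 0 < x i) ∧ ∑ i, x i < 1},
          Complex.exp (-Complex.I * ((∑ i, x i * ω i : ℝ) : ℂ)) =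
      (-Complex.I / (Real.sqrt (2 * Real.pi) : ℂ)) ^ n *
        ∑ r : Fin (n + 1),
          Complex.exp (-Complex.I * ((Matrix.vecCons (0 : ℝ) ω r : ℝ) : ℂ)) /
            ((∏ r' ∈ Finset.univ.erase r,
                (Matrix.vecCons (0 : ℝ) ω r' - Matrix.vecCons (0 : ℝ) ω r) : ℝ) : ℂ) :=
  fourier_indicator_simplex_general ω hω0 hωinj
end

section
/- Let n ≥ 1, let ω_0, ω_1, …, ω_n be real numbers, let Ω denote the index set {0, 1, …, n}, and fix r ∈ Ω. For B ⊆ Ω let σ_B = Σ_{j∈B} ω_j and |B| its cardinality, and define sgn(−1) = −1, sgn(0) = 0, and sgn(k) = 1 for integers k ≥ 1. Then Σ_{B ⊆ Ω} (−1)^{|B|} · sgn(|B| − 1) · exp(−i(σ_B − (|B| − 1)ω_r)) = −e^{−i ω_r} + Σ_{r'∈Ω, r'≠r} e^{−i ω_{r'}}. -/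
/-!
With `y j = exp (-i (ω j - ω r))`, each summand is
`exp (-i ω r) · sgn(|B| - 1) · ∏_{j ∈ B} (-y j)`.
Because `y r = 1`, the unweighted sum `∑_B ∏_{j ∈ B} (-y j) = ∏_j (1 - y j)` vanishes, and
`sgn(k - 1)` differs from `1` only at `k = 0` (by `-2`) and `k = 1` (by `-1`). Hence only the empty
set and the singletons contribute, leaving `exp (-i ω r) · (∑_j y j - 2)`.
-/

open Finset

section
variable {ι R : Type*} [Fintype ι] [CommRing R]

theorem sum_prod_neg_eq_zero_of_eq_one {y : ι → R} {r : ι} (hr : y r = 1) :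
    ∑ B : Finset ι, ∏ j ∈ B, -y j = 0 := by
  rw [← powerset_univ, ← prod_one_add]
  exact prod_eq_zero (mem_univ r) (by simp [hr])

theorem sum_filter_card_eq_one_prod (f : ι → R) :
    ∑ B : Finset ι with #B = 1, ∏ j ∈ B, f j = ∑ j, f j := by
  rw [← powerset_univ, ← powersetCard_eq_filter, powersetCard_one, sum_map]
  simp

theorem intCast_sign_natCast_sub_one (k : ℕ) :
    ((Int.sign ((k : ℤ) - 1) : ℤ) : R) =
      1 - (if k = 0 then 2 else 0) - (if k = 1 then 1 else 0) := by
  rcases k with _ | _ | k <;> norm_num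

theorem sum_neg_one_pow_card_mul_sign_mul_prod {y : ι → R} {r : ι} (hr : y r = 1) :
    ∑ B : Finset ι, (-1) ^ #B * ((Int.sign ((#B : ℤ) - 1) : ℤ) : R) * ∏ j ∈ B, y j =
      ∑ j, y j - 2 := by
  classical
  have hprod (B : Finset ι) :
      (-1) ^ #B * ((Int.sign ((#B : ℤ) - 1) : ℤ) : R) * ∏ j ∈ B, y j =
        ((Int.sign ((#B : ℤ) - 1) : ℤ) : R) * ∏ j ∈ B, -y j := by
    rw [prod_neg]; ring
  simp_rw [hprod, intCast_sign_natCast_sub_one, card_eq_zero, sub_mul, ite_mul, one_mul,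
    zero_mul, sum_sub_distrib, sum_ite_eq', ← sum_filter, sum_filter_card_eq_one_prod,
    sum_prod_neg_eq_zero_of_eq_one hr]
  simp only [mem_univ, if_true, prod_empty, mul_one, sum_neg_distrib]
  ring

end

open Complex in
theorem exp_neg_I_mul_sum_sub_card_mul {ι : Type*} (B : Finset ι) (ω : ι → ℝ) (a : ℝ) :
    exp (-I * (((∑ j ∈ B, ω j) - ((#B : ℝ) - 1) * a : ℝ) : ℂ)) =
      exp (-I * a) * ∏ j ∈ B, exp (-I * ((ω j - a : ℝ) : ℂ)) := by
  rw [← exp_sum, ← exp_add]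
  congr 1
  push_cast
  simp only [mul_sub, sum_sub_distrib, sum_const, nsmul_eq_mul, ← mul_sum]
  ring

theorem subset_sum_exponential_cancellation_general {n : ℕ}
    (ω : Fin (n + 1) → ℝ) (r : Fin (n + 1)) :
    ∑ B : Finset (Fin (n + 1)),
        (-1 : ℂ) ^ B.card * ((Int.sign ((B.card : ℤ) - 1) : ℤ) : ℂ) *
          Complex.exp (-Complex.I *
            (((∑ j ∈ B, ω j) - ((B.card : ℝ) - 1) * ω r : ℝ) : ℂ)) =
      -Complex.exp (-Complex.I * ((ω r : ℝ) : ℂ)) +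
        ∑ r' ∈ Finset.univ.erase r, Complex.exp (-Complex.I * ((ω r' : ℝ) : ℂ)) := by
  set e : Fin (n + 1) → ℂ := fun j ↦ Complex.exp (-Complex.I * (ω j : ℂ))
  set y : Fin (n + 1) → ℂ := fun j ↦ Complex.exp (-Complex.I * ((ω j - ω r : ℝ) : ℂ))
  have hy : y r = 1 := by simp [y]
  have hey (j : Fin (n + 1)) : e r * y j = e j := by
    simp only [e, y, ← Complex.exp_add]
    congr 1
    push_cast
    ring
  calc _ = ∑ B : Finset (Fin (n + 1)), e r *
          ((-1) ^ #B * ((Int.sign ((#B : ℤ) - 1) : ℤ) : ℂ) * ∏ j ∈ B, y j) := by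
        simp_rw [exp_neg_I_mul_sum_sub_card_mul]
        exact sum_congr rfl fun B _ ↦ by ring
    _ = ∑ j, e j - 2 * e r := by
        rw [← mul_sum, sum_neg_one_pow_card_mul_sign_mul_prod hy, mul_sub, mul_sum]
        simp_rw [hey]
        ring
    _ = _ := by
        rw [← add_sum_erase _ _ (mem_univ r)]
        ring

/-- Summing over all subsets `B` of the index set `{0, …, n}`:
`Σ_B (−1)^{|B|} sgn(|B|−1) e^{−i(σ_B − (|B|−1)ω_r)}
  = −e^{−i ω_r} + Σ_{r'≠r} e^{−i ω_{r'}}`,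
where `σ_B = Σ_{j∈B} ω_j`. -/
theorem subset_sum_exponential_cancellation {n : ℕ} (hn : 1 ≤ n)
    (ω : Fin (n + 1) → ℝ) (r : Fin (n + 1)) :
    ∑ B : Finset (Fin (n + 1)),
        (-1 : ℂ) ^ B.card * ((Int.sign ((B.card : ℤ) - 1) : ℤ) : ℂ) *
          Complex.exp (-Complex.I *
            (((∑ j ∈ B, ω j) - ((B.card : ℝ) - 1) * ω r : ℝ) : ℂ)) =
      -Complex.exp (-Complex.I * ((ω r : ℝ) : ℂ)) +
        ∑ r' ∈ Finset.univ.erase r, Complex.exp (-Complex.I * ((ω r' : ℝ) : ℂ)) :=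
  subset_sum_exponential_cancellation_general ω r
end

section
/- Let H_1, …, H_N be N affine hyperplanes in ℝ^n. Then the complement ℝ^n \ (H_1 ∪ ⋯ ∪ H_N) has at most Σ_{k=0}^n C(N, k) connected components, where C(N, k) denotes the binomial coefficient (taken to be 0 when k > N). -/
/-!
The complement of the hyperplanes `f i = 0` is the disjoint union of the open convex cells cut out
by sign conditions, so its connected components inject into the set of realizable sign vectors.
These are counted by deletion–restriction: after removing the last hyperplane `g = 0`, a sign
vector of the remaining hyperplanes is realized with both signs of `g` only if its convex cell
crosses `{g = 0}`, i.e. only if it is realized by the arrangement restricted to that hyperplane,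
a space of one dimension less. Pascal's rule then gives `∑_{k ≤ d} C(N, k)` by induction on `N`.
-/

open Set

theorem Nat.sum_range_choose_succ_eq (N d : ℕ) :
    ∑ k ∈ Finset.range (d + 1), (N + 1).choose k =
      ∑ k ∈ Finset.range (d + 1), N.choose k + ∑ k ∈ Finset.range d, N.choose k := by
  rw [Finset.sum_range_succ', Finset.sum_range_succ' (fun k => N.choose k)]
  simp only [Nat.choose_succ_succ', Finset.sum_add_distrib, Nat.choose_zero_right]
  ring

theorem Set.ncard_eq_ncard_snoc_add_ncard_snoc {n : ℕ} (P : Set (Fin (n + 1) → Bool)) :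
    P.ncard = {t | Fin.snoc t true ∈ P}.ncard + {t | Fin.snoc t false ∈ P}.ncard := by
  have hP : P = (Fin.snoc · true) '' {t | Fin.snoc t true ∈ P} ∪
      (Fin.snoc · false) '' {t | Fin.snoc t false ∈ P} := by
    ext s
    rw [← Fin.snoc_init_self s]
    cases s (Fin.last n) <;> simp [Fin.snoc_injective2.eq_iff]
  have hinj (b : Bool) : Function.Injective (Fin.snoc · b : (Fin n → Bool) → _) :=
    fun _ _ h => (Fin.snoc_injective2 (α := fun _ => Bool) h).1
  conv_lhs => rw [hP]
  rw [ncard_union_eq, ncard_image_of_injective _ (hinj _), ncard_image_of_injective _ (hinj _)]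
  simp [disjoint_left, Fin.snoc_injective2.eq_iff]

theorem ConnectedComponents.exists_injective_of_isLocallyConstant {X S : Type*}
    [TopologicalSpace X] {σ : X → S} (hσ : IsLocallyConstant σ)
    (hfiber : ∀ s, IsPreconnected (σ ⁻¹' {s})) :
    ∃ F : ConnectedComponents X → S, Function.Injective F := by
  refine ⟨Quotient.lift σ fun x y hxy => hσ.apply_eq_of_isPreconnected
    isPreconnected_connectedComponent mem_connectedComponent
    (hxy ▸ mem_connectedComponent), ?_⟩
  rintro ⟨x⟩ ⟨y⟩ hxy
  exact ConnectedComponents.coe_eq_coe'.mpr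
    ((hfiber (σ y)).subset_connectedComponent rfl hxy)

section

variable {E : Type*} [AddCommGroup E] [Module ℝ E]

theorem Convex.exists_affineMap_eq_zero {K : Set E} (hK : Convex ℝ K) (g : E →ᵃ[ℝ] ℝ)
    {x y : E} (hx : x ∈ K) (hy : y ∈ K) (hgx : g x ≤ 0) (hgy : 0 ≤ g y) :
    ∃ z ∈ K, g z = 0 := by
  have hcont : Continuous fun θ : ℝ => g (AffineMap.lineMap x y θ) := by
    simp only [AffineMap.apply_lineMap]
    exact AffineMap.lineMap_continuous
  obtain ⟨θ, hθ, hz⟩ := intermediate_value_Icc zero_le_one hcont.continuousOn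
    (by simpa using And.intro hgx hgy)
  exact ⟨_, hK.lineMap_mem hx hy hθ, hz⟩

theorem AffineMap.exists_range_eq_preimage_zero [FiniteDimensional ℝ E] {g : E →ᵃ[ℝ] ℝ}
    (hg : g.linear ≠ 0) {z₀ : E} (hz₀ : g z₀ = 0) :
    ∃ (K : Submodule ℝ E) (T : K →ᵃ[ℝ] E),
      Module.finrank ℝ K + 1 = Module.finrank ℝ E ∧ range T = g ⁻¹' {0} := by
  refine ⟨LinearMap.ker g.linear,
    (AffineEquiv.constVAdd ℝ E z₀).toAffineMap.comp (LinearMap.ker g.linear).subtype.toAffineMap,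
    Module.Dual.finrank_ker_add_one_of_ne_zero hg, ?_⟩
  ext z
  simp only [mem_range, AffineMap.coe_comp, Function.comp_apply, Subtype.exists,
    LinearMap.mem_ker, mem_preimage, mem_singleton_iff]
  constructor
  · rintro ⟨v, hv, rfl⟩
    simpa [hv, hz₀, add_comm] using g.map_vadd z₀ v
  · intro hz
    refine ⟨z - z₀, ?_, by simp⟩
    simpa [hz, hz₀] using g.linearMap_vsub z z₀

end

namespace AffineArrangement

variable {E F ι : Type*} [AddCommGroup E] [Module ℝ E] [AddCommGroup F] [Module ℝ F]

def cell (f : ι → E →ᵃ[ℝ] ℝ) (s : ι → Bool) : Set E :=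
  ⋂ i, f i ⁻¹' if s i then Ioi 0 else Iio 0

noncomputable def signVector (f : ι → E →ᵃ[ℝ] ℝ) (x : E) : ι → Bool :=
  fun i => decide (0 < f i x)

def signVectors (f : ι → E →ᵃ[ℝ] ℝ) : Set (ι → Bool) := {s | (cell f s).Nonempty}

section

variable {f : ι → E →ᵃ[ℝ] ℝ}

theorem mem_cell_iff {x : E} {s : ι → Bool} :
    x ∈ cell f s ↔ (∀ i, f i x ≠ 0) ∧ signVector f x = s := by
  simp only [cell, mem_iInter, mem_preimage, signVector, funext_iff, ← forall_and]
  refine forall_congr' fun i => ?_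
  cases s i
  · simpa using ⟨fun h => ⟨h.ne, h.le⟩, fun h => h.2.lt_of_ne h.1⟩
  · simpa using fun h => h.ne'

theorem convex_cell (s : ι → Bool) : Convex ℝ (cell f s) :=
  convex_iInter fun i => by
    split
    · exact (convex_Ioi 0).affine_preimage (f i)
    · exact (convex_Iio 0).affine_preimage (f i)

theorem isOpen_cell [TopologicalSpace E] [Finite ι] (hf : ∀ i, Continuous (f i))
    (s : ι → Bool) : IsOpen (cell f s) :=
  isOpen_iInter_of_finite fun i => by
    split
    · exact isOpen_Ioi.preimage (hf i)
    · exact isOpen_Iio.preimage (hf i)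

theorem cell_comp (T : F →ᵃ[ℝ] E) (s : ι → Bool) :
    cell (fun i => (f i).comp T) s = T ⁻¹' cell f s := by
  simp only [cell, preimage_iInter, AffineMap.coe_comp, preimage_comp]

theorem signVectors_comp (T : F →ᵃ[ℝ] E) :
    signVectors (fun i => (f i).comp T) = {s | (cell f s ∩ range T).Nonempty} := by
  ext s
  rw [signVectors, mem_ofPred_eq, cell_comp, ← image_nonempty, image_preimage_eq_inter_range,
    mem_ofPred_eq]

theorem finite_connectedComponents_and_card_le [TopologicalSpace E] [ContinuousAdd E]
    [ContinuousSMul ℝ E] [Finite ι] (hf : ∀ i, Continuous (f i)) :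
    Finite (ConnectedComponents {x | ∀ i, f i x ≠ 0}) ∧
      Nat.card (ConnectedComponents {x | ∀ i, f i x ≠ 0}) ≤ (signVectors f).ncard := by
  let σ : {x | ∀ i, f i x ≠ 0} → signVectors f :=
    fun x => ⟨signVector f x, x, mem_cell_iff.2 ⟨x.2, rfl⟩⟩
  have hfiber (s : signVectors f) : σ ⁻¹' {s} = Subtype.val ⁻¹' cell f s := by
    ext x
    simp only [mem_preimage, mem_singleton_iff, Subtype.ext_iff, mem_cell_iff]
    exact ⟨fun h => ⟨x.2, h⟩, And.right⟩
  have hσ : IsLocallyConstant σ := IsLocallyConstant.iff_isOpen_fiber.2 fun s => by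
    rw [hfiber]
    exact (isOpen_cell hf s.1).preimage continuous_subtype_val
  have hconn (s : signVectors f) : IsPreconnected (σ ⁻¹' {s}) := by
    rw [hfiber, ← Topology.IsInducing.subtypeVal.isPreconnected_image,
      image_preimage_eq_of_subset fun x hx => by simpa using (mem_cell_iff.1 hx).1]
    exact (convex_cell s.1).isPreconnected
  obtain ⟨F, hF⟩ := ConnectedComponents.exists_injective_of_isLocallyConstant hσ hconn
  exact ⟨Finite.of_injective F hF,
    (Nat.card_le_card_of_injective F hF).trans (Nat.card_coe_set_eq _).le⟩

end

section

variable {n : ℕ} (f : Fin n → E →ᵃ[ℝ] ℝ) (g : E →ᵃ[ℝ] ℝ)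

theorem cell_snoc (t : Fin n → Bool) (b : Bool) :
    cell (Fin.snoc f g) (Fin.snoc t b) = cell f t ∩ g ⁻¹' if b then Ioi 0 else Iio 0 := by
  ext x
  simp [cell, Fin.forall_fin_succ']

variable {f g} in
theorem snoc_mem_signVectors_snoc {t : Fin n → Bool} {b : Bool} :
    Fin.snoc t b ∈ signVectors (Fin.snoc f g) ↔
      (cell f t ∩ g ⁻¹' if b then Ioi 0 else Iio 0).Nonempty := by
  rw [signVectors, mem_ofPred_eq, cell_snoc]

theorem setOf_snoc_mem_signVectors_subset (b : Bool) :
    {t | Fin.snoc t b ∈ signVectors (Fin.snoc f g)} ⊆ signVectors f :=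
  fun _ ht => (snoc_mem_signVectors_snoc.1 ht).mono inter_subset_left

theorem setOf_snoc_mem_signVectors_inter_subset :
    {t | Fin.snoc t true ∈ signVectors (Fin.snoc f g)} ∩
        {t | Fin.snoc t false ∈ signVectors (Fin.snoc f g)} ⊆
      {t | (cell f t ∩ g ⁻¹' {0}).Nonempty} := by
  rintro t ⟨hpos, hneg⟩
  obtain ⟨x, hx, hgx⟩ := snoc_mem_signVectors_snoc.1 hpos
  obtain ⟨y, hy, hgy⟩ := snoc_mem_signVectors_snoc.1 hneg
  simp only [if_true, mem_preimage, mem_Ioi, Bool.false_eq_true, if_false, mem_Iio] at hgx hgy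
  exact (convex_cell t).exists_affineMap_eq_zero g hy hx hgy.le hgx.le

end

theorem ncard_signVectors_le [FiniteDimensional ℝ E] {N : ℕ} (f : Fin N → E →ᵃ[ℝ] ℝ) {d : ℕ}
    (hd : Module.finrank ℝ E ≤ d) :
    (signVectors f).ncard ≤ ∑ k ∈ Finset.range (d + 1), N.choose k := by
  induction N generalizing E d with
  | zero =>
    calc (signVectors f).ncard ≤ Nat.card (Fin 0 → Bool) := ncard_le_card _
      _ = Nat.choose 0 0 := by simp
      _ ≤ _ := Finset.single_le_sum (fun _ _ => Nat.zero_le _) (by simp)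
  | succ N ih =>
    rw [← Fin.snoc_init_self f, ncard_eq_ncard_snoc_add_ncard_snoc,
      ← ncard_union_add_ncard_inter, Nat.sum_range_choose_succ_eq]
    set g := f (Fin.last N)
    set f' := Fin.init f
    gcongr
    · exact (ncard_le_ncard (union_subset (setOf_snoc_mem_signVectors_subset f' g true)
        (setOf_snoc_mem_signVectors_subset f' g false))).trans (ih f' hd)
    set I := {t | Fin.snoc t true ∈ signVectors (Fin.snoc f' g)} ∩
      {t | Fin.snoc t false ∈ signVectors (Fin.snoc f' g)}
    rcases I.eq_empty_or_nonempty with hI | ⟨t, ht⟩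
    · simp [hI]
    obtain ⟨x, -, hgx⟩ := snoc_mem_signVectors_snoc.1 ht.1
    obtain ⟨z₀, -, hz₀⟩ := setOf_snoc_mem_signVectors_inter_subset f' g ht
    have hg : g.linear ≠ 0 := fun h => by
      have := g.linearMap_vsub x z₀
      simp_all
    obtain ⟨K, T, hK, hT⟩ := g.exists_range_eq_preimage_zero hg hz₀
    obtain ⟨m, rfl⟩ : ∃ m, d = m + 1 := ⟨d - 1, by omega⟩
    calc I.ncard ≤ (signVectors fun i => (f' i).comp T).ncard := by
          refine ncard_le_ncard ?_
          rw [signVectors_comp, hT]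
          exact setOf_snoc_mem_signVectors_inter_subset f' g
      _ ≤ _ := ih _ (by omega)

end AffineArrangement

theorem hyperplane_arrangement_component_count_general {n N : ℕ}
    (a : Fin N → Fin n → ℝ) (b : Fin N → ℝ) :
    Finite (ConnectedComponents
        ↥((⋃ i, {x : Fin n → ℝ | ∑ j, a i j * x j = b i})ᶜ)) ∧
      Nat.card (ConnectedComponents
          ↥((⋃ i, {x : Fin n → ℝ | ∑ j, a i j * x j = b i})ᶜ)) ≤
        ∑ k ∈ Finset.range (n + 1), N.choose k := by
  let f : Fin N → (Fin n → ℝ) →ᵃ[ℝ] ℝ := fun i =>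
    (LinearMap.proj i ∘ₗ Matrix.mulVecLin a).toAffineMap - AffineMap.const ℝ _ (b i)
  have hf (i : Fin N) (x : Fin n → ℝ) : f i x = ∑ j, a i j * x j - b i := rfl
  have hC : (⋃ i, {x : Fin n → ℝ | ∑ j, a i j * x j = b i})ᶜ = {x | ∀ i, f i x ≠ 0} := by
    ext x
    simp [hf, sub_eq_zero]
  rw [hC]
  obtain ⟨hfinite, hcard⟩ := AffineArrangement.finite_connectedComponents_and_card_le fun i =>
    AffineMap.continuous_linear_iff.1 (LinearMap.continuous_of_finiteDimensional (f i).linear)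
  exact ⟨hfinite, hcard.trans (AffineArrangement.ncard_signVectors_le f (by simp))⟩

/-- The complement of a union of `N` affine hyperplanes in `ℝ^n` has at most
`Σ_{k=0}^n C(N, k)` connected components. -/
theorem hyperplane_arrangement_component_count {n N : ℕ}
    (a : Fin N → Fin n → ℝ) (b : Fin N → ℝ) (ha : ∀ i, a i ≠ 0) :
    Finite (ConnectedComponents
        ↥((⋃ i, {x : Fin n → ℝ | ∑ j, a i j * x j = b i})ᶜ)) ∧
      Nat.card (ConnectedComponents
          ↥((⋃ i, {x : Fin n → ℝ | ∑ j, a i j * x j = b i})ᶜ)) ≤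
        ∑ k ∈ Finset.range (n + 1), N.choose k :=
  hyperplane_arrangement_component_count_general a b
end
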